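/- arXiv:1908.06106 — 3 statements merged into one kernel-verified Lean document; each statement's English description precedes it below -/
import Mathlib

section
/- Six points of the form (1, d_j, d_j^3) in ℙ^2, j = 1,…,6, with the d_j pairwise distinct, lie on a common conic if and only if d_1 + d_2 + d_3 + d_4 + d_5 + d_6 = 0. -/
open Polynomial Finset

private lemma six_le_natDegree {K : Type*} [Field K] (d : Fin 6 → K)
    (hd : Function.Injective d) (r : K[X]) (hr : r ≠ 0)
    (hroot : ∀ j, r.eval (d j) = 0) : 6 ≤ r.natDegree := by
  classical
  have hsub : Finset.univ.image d ⊆ r.roots.toFinset := by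
    intro x hx
    simp only [Finset.mem_image] at hx
    obtain ⟨j, _, rfl⟩ := hx
    simp [Multiset.mem_toFinset, mem_roots, hr, hroot j]
  have h1 : (Finset.univ.image d).card = 6 := by
    rw [Finset.card_image_of_injective _ hd]; simp
  have h2 := Finset.card_le_card hsub
  have h3 := r.roots.toFinset_card_le
  have h4 := r.card_roots' 
  omega

/-- Six points `(1 : d_j : d_j³)` with pairwise distinct `d_j` lie on a common
conic (a nonzero quadratic form in `X, Y, Z`) iff `∑ d_j = 0`. -/
theorem stmt2 (K : Type*) [Field K] [CharZero K] (d : Fin 6 → K)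
    (hd : Function.Injective d) :
    (∃ c : Fin 6 → K, c ≠ 0 ∧ ∀ j : Fin 6,
        c 0 * 1 ^ 2 + c 1 * (d j) ^ 2 + c 2 * ((d j) ^ 3) ^ 2
          + c 3 * (1 * d j) + c 4 * (1 * (d j) ^ 3) + c 5 * (d j * (d j) ^ 3) = 0)
      ↔ ∑ j, d j = 0 := by
  set P : K[X] := ∏ j : Fin 6, (X - C (d j)) with hP
  have hPmonic : P.Monic := monic_prod_of_monic _ _ fun i _ => monic_X_sub_C _
  have hPdeg : P.natDegree = 6 := by
    rw [hP, natDegree_prod_of_monic _ _ fun i _ => monic_X_sub_C _]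
    simp [natDegree_X_sub_C]
  have hP5 : P.coeff 5 = -∑ j, d j := by
    have := prod_X_sub_C_coeff_card_pred (Finset.univ : Finset (Fin 6)) d (by simp)
    simpa using this
  have hP6 : P.coeff 6 = 1 := by
    have := hPmonic.coeff_natDegree
    rwa [hPdeg] at this
  have hPeval : ∀ j, P.eval (d j) = 0 := by
    intro j
    rw [hP, eval_prod]
    exact Finset.prod_eq_zero (Finset.mem_univ j) (by simp)
  constructor
  · rintro ⟨c, hc, hcz⟩
    set q : K[X] := C (c 0) + C (c 3) * X + C (c 1) * X ^ 2 + C (c 4) * X ^ 3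
        + C (c 5) * X ^ 4 + C (c 2) * X ^ 6 with hq
    have hqcoeff : ∀ n, q.coeff n =
        if n = 0 then c 0 else if n = 1 then c 3 else if n = 2 then c 1
        else if n = 3 then c 4 else if n = 4 then c 5 else if n = 6 then c 2 else 0 := by
      intro n
      simp only [hq, coeff_add, coeff_C_mul, coeff_X_pow, coeff_C, coeff_C_mul,
        mul_ite, mul_one, mul_zero, coeff_X]
      split_ifs <;> first | omega | ring
    have hqeval : ∀ j, q.eval (d j) = 0 := by
      intro j
      have := hcz j
      simp only [hq, eval_add, eval_mul, eval_C, eval_pow, eval_X]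
      linear_combination this
    have hc2 : c 2 ≠ 0 := by
      intro h2
      have hq0 : q = 0 := by
        by_contra h
        have := six_le_natDegree d hd q h hqeval
        have hle : q.natDegree ≤ 4 := by
          rw [natDegree_le_iff_coeff_eq_zero]
          intro m hm
          rw [hqcoeff]
          split_ifs <;> first | omega | exact h2 | rfl
        omega
      apply hc
      funext i
      have key : ∀ n : ℕ, q.coeff n = 0 := fun n => by rw [hq0]; simp
      fin_cases i
      · have := (key 0).symm.trans (hqcoeff 0); simpa using this.symm
      · have := (key 2).symm.trans (hqcoeff 2); simpa using this.symm
      · exact h2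
      · have := (key 1).symm.trans (hqcoeff 1); simpa using this.symm
      · have := (key 3).symm.trans (hqcoeff 3); simpa using this.symm
      · have := (key 4).symm.trans (hqcoeff 4); simpa using this.symm
    -- now c 2 ≠ 0
    set r : K[X] := q - C (c 2) * P with hr
    have hrdeg : r.natDegree ≤ 5 := by
      rw [natDegree_le_iff_coeff_eq_zero]
      intro m hm
      rw [hr, coeff_sub, coeff_C_mul, hqcoeff]
      rcases eq_or_lt_of_le (show 6 ≤ m by omega) with h6 | h6
      · rw [← h6, hP6]
        norm_num
      · rw [coeff_eq_zero_of_natDegree_lt (by omega : P.natDegree < m)]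
        split_ifs <;> first | omega | ring
    have hr0 : r = 0 := by
      by_contra h
      have := six_le_natDegree d hd r h (fun j => by
        simp [hr, hqeval j, hPeval j])
      omega
    have : r.coeff 5 = 0 := by rw [hr0]; simp
    rw [hr, coeff_sub, coeff_C_mul, hqcoeff, hP5] at this
    simp only [show (5:ℕ) ≠ 0 by omega] at this
    norm_num at this
    rcases this with h | h
    · exact absurd h hc2
    · exact h
  · intro hsum
    refine ⟨![P.coeff 0, P.coeff 2, 1, P.coeff 1, P.coeff 3, P.coeff 4], ?_, ?_⟩
    · intro h
      have := congrFun h 2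
      simp at this
    · intro j
      have he := hPeval j
      rw [eval_eq_sum_range, hPdeg] at he
      simp only [Finset.sum_range_succ, Finset.sum_range_zero] at he
      rw [hP5, hsum, hP6] at he
      show P.coeff 0 * 1 ^ 2 + P.coeff 2 * d j ^ 2 + 1 * (d j ^ 3) ^ 2
          + P.coeff 1 * (1 * d j) + P.coeff 3 * (1 * d j ^ 3) + P.coeff 4 * (d j * d j ^ 3) = 0
      linear_combination he
end

section
/- The cubic form F(x,y,z,w) = a·xyz + b·xyw + c·xzw + d·yzw + e·x²y + f·xy² + g·z²w + h·zw², with coefficients the quintics of Proposition 2.1, vanishes identically when x, y, z, w are substituted by the products x = F_{12}F_{34}F_{56}, y = F_{13}F_{25}F_{46}, z = F_{12}F_{35}F_{46}, w = F_{13}F_{24}F_{56} of the linear forms F_{ij} = d_i d_j(d_i+d_j)X − (d_i^2+d_i d_j+d_j^2)Y + Z, as a polynomial identity in ℚ[d_1,…,d_6, X, Y, Z]. -/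
section OctanomialCoefficients
variable {R : Type*} [CommRing R]
/-- The coefficient `a` of the octanomial model (Proposition 2.1). -/
def octA (d₁ d₂ d₃ d₄ d₅ d₆ : R) : R :=
  d₁*d₃*d₂*d₄*(d₁+d₃-d₂-d₄) + d₂*d₄*d₅*d₆*(d₂+d₄-d₅-d₆) + d₅*d₆*d₁*d₃*(d₅+d₆-d₁-d₃)
  + d₅*d₆*(d₅+d₆)*(d₁^2+d₃^2-d₂^2-d₄^2) + d₁*d₃*(d₁+d₃)*(d₂^2+d₄^2-d₅^2-d₆^2)
  + d₂*d₄*(d₂+d₄)*(d₅^2+d₆^2-d₁^2-d₃^2)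
/-- The coefficient `b` of the octanomial model (Proposition 2.1). -/
def octB (d₁ d₂ d₃ d₄ d₅ d₆ : R) : R :=
  d₁*d₂*d₃*d₅*(d₁+d₂-d₃-d₅) + d₃*d₅*d₄*d₆*(d₃+d₅-d₄-d₆) + d₄*d₆*d₁*d₂*(d₄+d₆-d₁-d₂)
  + d₄*d₆*(d₄+d₆)*(d₁^2+d₂^2-d₃^2-d₅^2) + d₁*d₂*(d₁+d₂)*(d₃^2+d₅^2-d₄^2-d₆^2)
  + d₃*d₅*(d₃+d₅)*(d₄^2+d₆^2-d₁^2-d₂^2)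
/-- The coefficient `c` of the octanomial model (Proposition 2.1). -/
def octC (d₁ d₂ d₃ d₄ d₅ d₆ : R) : R :=
  d₁*d₃*d₂*d₅*(d₁+d₃-d₂-d₅) + d₂*d₅*d₄*d₆*(d₂+d₅-d₄-d₆) + d₄*d₆*d₁*d₃*(d₄+d₆-d₁-d₃)
  + d₄*d₆*(d₄+d₆)*(d₁^2+d₃^2-d₂^2-d₅^2) + d₁*d₃*(d₁+d₃)*(d₂^2+d₅^2-d₄^2-d₆^2)
  + d₂*d₅*(d₂+d₅)*(d₄^2+d₆^2-d₁^2-d₃^2)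
/-- The coefficient `d` of the octanomial model (Proposition 2.1). -/
def octD (d₁ d₂ d₃ d₄ d₅ d₆ : R) : R :=
  d₁*d₂*d₃*d₄*(d₁+d₂-d₃-d₄) + d₃*d₄*d₅*d₆*(d₃+d₄-d₅-d₆) + d₅*d₆*d₁*d₂*(d₅+d₆-d₁-d₂)
  + d₅*d₆*(d₅+d₆)*(d₁^2+d₂^2-d₃^2-d₄^2) + d₁*d₂*(d₁+d₂)*(d₃^2+d₄^2-d₅^2-d₆^2)
  + d₃*d₄*(d₃+d₄)*(d₅^2+d₆^2-d₁^2-d₂^2)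
/-- The coefficient `e` of the octanomial model (Proposition 2.1). -/
def octE (d₁ d₂ d₃ d₄ d₅ d₆ : R) : R :=
  -(d₁+d₃+d₅)*(d₂+d₄+d₆)*(d₁-d₅)*(d₂-d₆)*(d₃-d₄)
/-- The coefficient `f` of the octanomial model (Proposition 2.1). -/
def octF (d₁ d₂ d₃ d₄ d₅ d₆ : R) : R :=
  -(d₁+d₂+d₄)*(d₃+d₅+d₆)*(d₁-d₄)*(d₂-d₅)*(d₃-d₆)
/-- The coefficient `g` of the octanomial model (Proposition 2.1). -/
def octG (d₁ d₂ d₃ d₄ d₅ d₆ : R) : R :=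
  -(d₁+d₃+d₄)*(d₂+d₅+d₆)*(d₁-d₄)*(d₂-d₆)*(d₃-d₅)
/-- The coefficient `h` of the octanomial model (Proposition 2.1). -/
def octH (d₁ d₂ d₃ d₄ d₅ d₆ : R) : R :=
  -(d₁+d₂+d₅)*(d₃+d₄+d₆)*(d₁-d₅)*(d₃-d₆)*(d₂-d₄)
end OctanomialCoefficients
open MvPolynomial
/-- The linear form `F_{ij} = dᵢdⱼ(dᵢ+dⱼ)X - (dᵢ²+dᵢdⱼ+dⱼ²)Y + Z`. -/
def Fform {R : Type*} [CommRing R] (di dj XX YY ZZ : R) : R :=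
  di * dj * (di + dj) * XX - (di ^ 2 + di * dj + dj ^ 2) * YY + ZZ

/-- `X`-coefficient of the linear form `F_ij`. -/
def Pform {R : Type*} [CommRing R] (a b : R) : R := a * b * (a + b)

/-- (negated) `Y`-coefficient of the linear form `F_ij`. -/
def Qform {R : Type*} [CommRing R] (a b : R) : R := a ^ 2 + a * b + b ^ 2

lemma Fform_PQ {R : Type*} [CommRing R] (a b XX YY ZZ : R) :
    Fform a b XX YY ZZ = Pform a b * XX - Qform a b * YY + ZZ := by
  simp only [Fform, Pform, Qform]

/-- `X`-component of the common factor `S`. -/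
def octSX {R : Type*} [CommRing R] (d1 d2 d3 d4 d5 d6 : R) : R :=
  d1*d3^2*d5*d6^4 + d1*d3^2*d5^2*d6^3 - d1*d3^2*d4*d6^4 - d1*d3^2*d4^2*d6^3 - d1*d2^2*d5*d6^4 -
    d1*d2^2*d5^2*d6^3 + d1*d2^2*d4*d6^4 + d1*d2^2*d4^2*d6^3 + d1^2*d3*d5*d6^4 + d1^2*d3*d5^2*d6^3 -
    d1^2*d3*d4*d6^4 - d1^2*d3*d4^2*d6^3 - d1^2*d2*d5*d6^4 - d1^2*d2*d5^2*d6^3 + d1^2*d2*d4*d6^4 +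
    d1^2*d2*d4^2*d6^3 - d1^3*d3^2*d5*d6^2 - d1^3*d3^2*d5^2*d6 + d1^3*d3^2*d4*d6^2 +
    d1^3*d3^2*d4^2*d6 + d1^3*d2^2*d5*d6^2 + d1^3*d2^2*d5^2*d6 - d1^3*d2^2*d4*d6^2 -
    d1^3*d2^2*d4^2*d6 - d1^4*d3*d5*d6^2 - d1^4*d3*d5^2*d6 + d1^4*d3*d4*d6^2 + d1^4*d3*d4^2*d6 +
    d1^4*d2*d5*d6^2 + d1^4*d2*d5^2*d6 - d1^4*d2*d4*d6^2 - d1^4*d2*d4^2*d6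

/-- `Y`-component of the common factor `S`. -/
def octSY {R : Type*} [CommRing R] (d1 d2 d3 d4 d5 d6 : R) : R :=
  - d3^2*d5*d6^4 - d3^2*d5^2*d6^3 + d3^2*d4*d6^4 + d3^2*d4^2*d6^3 + d2^2*d5*d6^4 + d2^2*d5^2*d6^3
    - d2^2*d4*d6^4 - d2^2*d4^2*d6^3 - d1*d3*d5*d6^4 - d1*d3*d5^2*d6^3 + d1*d3*d4*d6^4 +
    d1*d3*d4^2*d6^3 + d1*d2*d5*d6^4 + d1*d2*d5^2*d6^3 - d1*d2*d4*d6^4 - d1*d2*d4^2*d6^3 +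
    d1^3*d3^2*d5*d6 + d1^3*d3^2*d5^2 - d1^3*d3^2*d4*d6 - d1^3*d3^2*d4^2 - d1^3*d2^2*d5*d6 -
    d1^3*d2^2*d5^2 + d1^3*d2^2*d4*d6 + d1^3*d2^2*d4^2 + d1^4*d3*d5*d6 + d1^4*d3*d5^2 -
    d1^4*d3*d4*d6 - d1^4*d3*d4^2 - d1^4*d2*d5*d6 - d1^4*d2*d5^2 + d1^4*d2*d4*d6 + d1^4*d2*d4^2

/-- `Z`-component of the common factor `S`. -/
def octSZ {R : Type*} [CommRing R] (d1 d2 d3 d4 d5 d6 : R) : R :=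
  d3^2*d5*d6^2 + d3^2*d5^2*d6 - d3^2*d4*d6^2 - d3^2*d4^2*d6 - d2^2*d5*d6^2 - d2^2*d5^2*d6 +
    d2^2*d4*d6^2 + d2^2*d4^2*d6 + d1*d3*d5*d6^2 + d1*d3*d5^2*d6 - d1*d3*d4*d6^2 - d1*d3*d4^2*d6 -
    d1*d3^2*d5*d6 - d1*d3^2*d5^2 + d1*d3^2*d4*d6 + d1*d3^2*d4^2 - d1*d2*d5*d6^2 - d1*d2*d5^2*d6 +
    d1*d2*d4*d6^2 + d1*d2*d4^2*d6 + d1*d2^2*d5*d6 + d1*d2^2*d5^2 - d1*d2^2*d4*d6 - d1*d2^2*d4^2 -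
    d1^2*d3*d5*d6 - d1^2*d3*d5^2 + d1^2*d3*d4*d6 + d1^2*d3*d4^2 + d1^2*d2*d5*d6 + d1^2*d2*d5^2 -
    d1^2*d2*d4*d6 - d1^2*d2*d4^2

lemma octComp1_c300 {R : Type*} [CommRing R] (d1 d2 d3 d4 d5 d6 : R) :
    octA d1 d2 d3 d4 d5 d6 * ((Pform d1 d2) * (Pform d3 d5) * (Pform d4 d6))
      + octB d1 d2 d3 d4 d5 d6 * ((Pform d1 d3) * (Pform d2 d4) * (Pform d5 d6))
      + octE d1 d2 d3 d4 d5 d6 * ((Pform d1 d2) * (Pform d3 d4) * (Pform d5 d6))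
      + octF d1 d2 d3 d4 d5 d6 * ((Pform d1 d3) * (Pform d2 d5) * (Pform d4 d6))
    = ((Pform d2 d4) * (Pform d3 d5) * (octSX d1 d2 d3 d4 d5 d6)) := by
  simp only [octA, octB, octC, octD, octE, octF, octG, octH, Pform, Qform, octSX, octSY, octSZ]
  ring

lemma octComp2_c300 {R : Type*} [CommRing R] (d1 d2 d3 d4 d5 d6 : R) :
    octC d1 d2 d3 d4 d5 d6 * ((Pform d1 d2) * (Pform d3 d4) * (Pform d5 d6))
      + octD d1 d2 d3 d4 d5 d6 * ((Pform d1 d3) * (Pform d2 d5) * (Pform d4 d6))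
      + octG d1 d2 d3 d4 d5 d6 * ((Pform d1 d2) * (Pform d3 d5) * (Pform d4 d6))
      + octH d1 d2 d3 d4 d5 d6 * ((Pform d1 d3) * (Pform d2 d4) * (Pform d5 d6))
    = (-((Pform d3 d4) * (Pform d2 d5) * (octSX d1 d2 d3 d4 d5 d6))) := by
  simp only [octA, octB, octC, octD, octE, octF, octG, octH, Pform, Qform, octSX, octSY, octSZ]
  ring

lemma octComp1_c210 {R : Type*} [CommRing R] (d1 d2 d3 d4 d5 d6 : R) :
    octA d1 d2 d3 d4 d5 d6 * (-(Qform d1 d2) * (Pform d3 d5) * (Pform d4 d6) - (Pform d1 d2) * (Pform d3 d5) * (Qform d4 d6) - (Pform d1 d2) * (Qform d3 d5) * (Pform d4 d6))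
      + octB d1 d2 d3 d4 d5 d6 * (-(Qform d1 d3) * (Pform d2 d4) * (Pform d5 d6) - (Pform d1 d3) * (Pform d2 d4) * (Qform d5 d6) - (Pform d1 d3) * (Qform d2 d4) * (Pform d5 d6))
      + octE d1 d2 d3 d4 d5 d6 * (-(Qform d1 d2) * (Pform d3 d4) * (Pform d5 d6) - (Pform d1 d2) * (Pform d3 d4) * (Qform d5 d6) - (Pform d1 d2) * (Qform d3 d4) * (Pform d5 d6))
      + octF d1 d2 d3 d4 d5 d6 * (-(Qform d1 d3) * (Pform d2 d5) * (Pform d4 d6) - (Pform d1 d3) * (Pform d2 d5) * (Qform d4 d6) - (Pform d1 d3) * (Qform d2 d5) * (Pform d4 d6))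
    = (-(Qform d2 d4) * (Pform d3 d5) * (octSX d1 d2 d3 d4 d5 d6) + (Pform d2 d4) * (Pform d3 d5) * (octSY d1 d2 d3 d4 d5 d6) - (Pform d2 d4) * (Qform d3 d5) * (octSX d1 d2 d3 d4 d5 d6)) := by
  simp only [octA, octB, octC, octD, octE, octF, octG, octH, Pform, Qform, octSX, octSY, octSZ]
  ring

lemma octComp2_c210 {R : Type*} [CommRing R] (d1 d2 d3 d4 d5 d6 : R) :
    octC d1 d2 d3 d4 d5 d6 * (-(Qform d1 d2) * (Pform d3 d4) * (Pform d5 d6) - (Pform d1 d2) * (Pform d3 d4) * (Qform d5 d6) - (Pform d1 d2) * (Qform d3 d4) * (Pform d5 d6))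
      + octD d1 d2 d3 d4 d5 d6 * (-(Qform d1 d3) * (Pform d2 d5) * (Pform d4 d6) - (Pform d1 d3) * (Pform d2 d5) * (Qform d4 d6) - (Pform d1 d3) * (Qform d2 d5) * (Pform d4 d6))
      + octG d1 d2 d3 d4 d5 d6 * (-(Qform d1 d2) * (Pform d3 d5) * (Pform d4 d6) - (Pform d1 d2) * (Pform d3 d5) * (Qform d4 d6) - (Pform d1 d2) * (Qform d3 d5) * (Pform d4 d6))
      + octH d1 d2 d3 d4 d5 d6 * (-(Qform d1 d3) * (Pform d2 d4) * (Pform d5 d6) - (Pform d1 d3) * (Pform d2 d4) * (Qform d5 d6) - (Pform d1 d3) * (Qform d2 d4) * (Pform d5 d6))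
    = (-(-(Qform d3 d4) * (Pform d2 d5) * (octSX d1 d2 d3 d4 d5 d6) + (Pform d3 d4) * (Pform d2 d5) * (octSY d1 d2 d3 d4 d5 d6) - (Pform d3 d4) * (Qform d2 d5) * (octSX d1 d2 d3 d4 d5 d6))) := by
  simp only [octA, octB, octC, octD, octE, octF, octG, octH, Pform, Qform, octSX, octSY, octSZ]
  ring

lemma octComp1_c201 {R : Type*} [CommRing R] (d1 d2 d3 d4 d5 d6 : R) :
    octA d1 d2 d3 d4 d5 d6 * ((Pform d1 d2) * (Pform d4 d6) + (Pform d1 d2) * (Pform d3 d5) + (Pform d3 d5) * (Pform d4 d6))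
      + octB d1 d2 d3 d4 d5 d6 * ((Pform d1 d3) * (Pform d5 d6) + (Pform d1 d3) * (Pform d2 d4) + (Pform d2 d4) * (Pform d5 d6))
      + octE d1 d2 d3 d4 d5 d6 * ((Pform d1 d2) * (Pform d5 d6) + (Pform d1 d2) * (Pform d3 d4) + (Pform d3 d4) * (Pform d5 d6))
      + octF d1 d2 d3 d4 d5 d6 * ((Pform d1 d3) * (Pform d4 d6) + (Pform d1 d3) * (Pform d2 d5) + (Pform d2 d5) * (Pform d4 d6))
    = ((Pform d2 d4) * (octSX d1 d2 d3 d4 d5 d6) + (Pform d2 d4) * (Pform d3 d5) * (octSZ d1 d2 d3 d4 d5 d6) + (Pform d3 d5) * (octSX d1 d2 d3 d4 d5 d6)) := by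
  simp only [octA, octB, octC, octD, octE, octF, octG, octH, Pform, Qform, octSX, octSY, octSZ]
  ring

lemma octComp2_c201 {R : Type*} [CommRing R] (d1 d2 d3 d4 d5 d6 : R) :
    octC d1 d2 d3 d4 d5 d6 * ((Pform d1 d2) * (Pform d5 d6) + (Pform d1 d2) * (Pform d3 d4) + (Pform d3 d4) * (Pform d5 d6))
      + octD d1 d2 d3 d4 d5 d6 * ((Pform d1 d3) * (Pform d4 d6) + (Pform d1 d3) * (Pform d2 d5) + (Pform d2 d5) * (Pform d4 d6))
      + octG d1 d2 d3 d4 d5 d6 * ((Pform d1 d2) * (Pform d4 d6) + (Pform d1 d2) * (Pform d3 d5) + (Pform d3 d5) * (Pform d4 d6))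
      + octH d1 d2 d3 d4 d5 d6 * ((Pform d1 d3) * (Pform d5 d6) + (Pform d1 d3) * (Pform d2 d4) + (Pform d2 d4) * (Pform d5 d6))
    = (-((Pform d3 d4) * (octSX d1 d2 d3 d4 d5 d6) + (Pform d3 d4) * (Pform d2 d5) * (octSZ d1 d2 d3 d4 d5 d6) + (Pform d2 d5) * (octSX d1 d2 d3 d4 d5 d6))) := by
  simp only [octA, octB, octC, octD, octE, octF, octG, octH, Pform, Qform, octSX, octSY, octSZ]
  ring

lemma octComp1_c120 {R : Type*} [CommRing R] (d1 d2 d3 d4 d5 d6 : R) :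
    octA d1 d2 d3 d4 d5 d6 * ((Qform d1 d2) * (Pform d3 d5) * (Qform d4 d6) + (Qform d1 d2) * (Qform d3 d5) * (Pform d4 d6) + (Pform d1 d2) * (Qform d3 d5) * (Qform d4 d6))
      + octB d1 d2 d3 d4 d5 d6 * ((Qform d1 d3) * (Pform d2 d4) * (Qform d5 d6) + (Qform d1 d3) * (Qform d2 d4) * (Pform d5 d6) + (Pform d1 d3) * (Qform d2 d4) * (Qform d5 d6))
      + octE d1 d2 d3 d4 d5 d6 * ((Qform d1 d2) * (Pform d3 d4) * (Qform d5 d6) + (Qform d1 d2) * (Qform d3 d4) * (Pform d5 d6) + (Pform d1 d2) * (Qform d3 d4) * (Qform d5 d6))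
      + octF d1 d2 d3 d4 d5 d6 * ((Qform d1 d3) * (Pform d2 d5) * (Qform d4 d6) + (Qform d1 d3) * (Qform d2 d5) * (Pform d4 d6) + (Pform d1 d3) * (Qform d2 d5) * (Qform d4 d6))
    = (-(Qform d2 d4) * (Pform d3 d5) * (octSY d1 d2 d3 d4 d5 d6) + (Qform d2 d4) * (Qform d3 d5) * (octSX d1 d2 d3 d4 d5 d6) - (Pform d2 d4) * (Qform d3 d5) * (octSY d1 d2 d3 d4 d5 d6)) := by
  simp only [octA, octB, octC, octD, octE, octF, octG, octH, Pform, Qform, octSX, octSY, octSZ]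
  ring

lemma octComp2_c120 {R : Type*} [CommRing R] (d1 d2 d3 d4 d5 d6 : R) :
    octC d1 d2 d3 d4 d5 d6 * ((Qform d1 d2) * (Pform d3 d4) * (Qform d5 d6) + (Qform d1 d2) * (Qform d3 d4) * (Pform d5 d6) + (Pform d1 d2) * (Qform d3 d4) * (Qform d5 d6))
      + octD d1 d2 d3 d4 d5 d6 * ((Qform d1 d3) * (Pform d2 d5) * (Qform d4 d6) + (Qform d1 d3) * (Qform d2 d5) * (Pform d4 d6) + (Pform d1 d3) * (Qform d2 d5) * (Qform d4 d6))
      + octG d1 d2 d3 d4 d5 d6 * ((Qform d1 d2) * (Pform d3 d5) * (Qform d4 d6) + (Qform d1 d2) * (Qform d3 d5) * (Pform d4 d6) + (Pform d1 d2) * (Qform d3 d5) * (Qform d4 d6))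
      + octH d1 d2 d3 d4 d5 d6 * ((Qform d1 d3) * (Pform d2 d4) * (Qform d5 d6) + (Qform d1 d3) * (Qform d2 d4) * (Pform d5 d6) + (Pform d1 d3) * (Qform d2 d4) * (Qform d5 d6))
    = (-(-(Qform d3 d4) * (Pform d2 d5) * (octSY d1 d2 d3 d4 d5 d6) + (Qform d3 d4) * (Qform d2 d5) * (octSX d1 d2 d3 d4 d5 d6) - (Pform d3 d4) * (Qform d2 d5) * (octSY d1 d2 d3 d4 d5 d6))) := by
  simp only [octA, octB, octC, octD, octE, octF, octG, octH, Pform, Qform, octSX, octSY, octSZ]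
  ring

lemma octComp1_c111 {R : Type*} [CommRing R] (d1 d2 d3 d4 d5 d6 : R) :
    octA d1 d2 d3 d4 d5 d6 * (-(Pform d1 d2) * (Qform d4 d6) - (Qform d1 d2) * (Pform d4 d6) - (Qform d3 d5) * (Pform d4 d6) - (Pform d3 d5) * (Qform d4 d6) - (Pform d1 d2) * (Qform d3 d5) - (Qform d1 d2) * (Pform d3 d5))
      + octB d1 d2 d3 d4 d5 d6 * (-(Pform d1 d3) * (Qform d5 d6) - (Qform d1 d3) * (Pform d5 d6) - (Qform d2 d4) * (Pform d5 d6) - (Pform d2 d4) * (Qform d5 d6) - (Pform d1 d3) * (Qform d2 d4) - (Qform d1 d3) * (Pform d2 d4))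
      + octE d1 d2 d3 d4 d5 d6 * (-(Pform d1 d2) * (Qform d5 d6) - (Qform d1 d2) * (Pform d5 d6) - (Qform d3 d4) * (Pform d5 d6) - (Pform d3 d4) * (Qform d5 d6) - (Pform d1 d2) * (Qform d3 d4) - (Qform d1 d2) * (Pform d3 d4))
      + octF d1 d2 d3 d4 d5 d6 * (-(Pform d1 d3) * (Qform d4 d6) - (Qform d1 d3) * (Pform d4 d6) - (Qform d2 d5) * (Pform d4 d6) - (Pform d2 d5) * (Qform d4 d6) - (Pform d1 d3) * (Qform d2 d5) - (Qform d1 d3) * (Pform d2 d5))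
    = ((Pform d2 d4) * (octSY d1 d2 d3 d4 d5 d6) - (Qform d2 d4) * (octSX d1 d2 d3 d4 d5 d6) - (Qform d3 d5) * (octSX d1 d2 d3 d4 d5 d6) + (Pform d3 d5) * (octSY d1 d2 d3 d4 d5 d6) - (Pform d2 d4) * (Qform d3 d5) * (octSZ d1 d2 d3 d4 d5 d6) - (Qform d2 d4) * (Pform d3 d5) * (octSZ d1 d2 d3 d4 d5 d6)) := by
  simp only [octA, octB, octC, octD, octE, octF, octG, octH, Pform, Qform, octSX, octSY, octSZ]
  ring

lemma octComp2_c111 {R : Type*} [CommRing R] (d1 d2 d3 d4 d5 d6 : R) :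
    octC d1 d2 d3 d4 d5 d6 * (-(Pform d1 d2) * (Qform d5 d6) - (Qform d1 d2) * (Pform d5 d6) - (Qform d3 d4) * (Pform d5 d6) - (Pform d3 d4) * (Qform d5 d6) - (Pform d1 d2) * (Qform d3 d4) - (Qform d1 d2) * (Pform d3 d4))
      + octD d1 d2 d3 d4 d5 d6 * (-(Pform d1 d3) * (Qform d4 d6) - (Qform d1 d3) * (Pform d4 d6) - (Qform d2 d5) * (Pform d4 d6) - (Pform d2 d5) * (Qform d4 d6) - (Pform d1 d3) * (Qform d2 d5) - (Qform d1 d3) * (Pform d2 d5))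
      + octG d1 d2 d3 d4 d5 d6 * (-(Pform d1 d2) * (Qform d4 d6) - (Qform d1 d2) * (Pform d4 d6) - (Qform d3 d5) * (Pform d4 d6) - (Pform d3 d5) * (Qform d4 d6) - (Pform d1 d2) * (Qform d3 d5) - (Qform d1 d2) * (Pform d3 d5))
      + octH d1 d2 d3 d4 d5 d6 * (-(Pform d1 d3) * (Qform d5 d6) - (Qform d1 d3) * (Pform d5 d6) - (Qform d2 d4) * (Pform d5 d6) - (Pform d2 d4) * (Qform d5 d6) - (Pform d1 d3) * (Qform d2 d4) - (Qform d1 d3) * (Pform d2 d4))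
    = (-((Pform d3 d4) * (octSY d1 d2 d3 d4 d5 d6) - (Qform d3 d4) * (octSX d1 d2 d3 d4 d5 d6) - (Qform d2 d5) * (octSX d1 d2 d3 d4 d5 d6) + (Pform d2 d5) * (octSY d1 d2 d3 d4 d5 d6) - (Pform d3 d4) * (Qform d2 d5) * (octSZ d1 d2 d3 d4 d5 d6) - (Qform d3 d4) * (Pform d2 d5) * (octSZ d1 d2 d3 d4 d5 d6))) := by
  simp only [octA, octB, octC, octD, octE, octF, octG, octH, Pform, Qform, octSX, octSY, octSZ]
  ring

lemma octComp1_c102 {R : Type*} [CommRing R] (d1 d2 d3 d4 d5 d6 : R) :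
    octA d1 d2 d3 d4 d5 d6 * ((Pform d1 d2) + (Pform d3 d5) + (Pform d4 d6))
      + octB d1 d2 d3 d4 d5 d6 * ((Pform d1 d3) + (Pform d2 d4) + (Pform d5 d6))
      + octE d1 d2 d3 d4 d5 d6 * ((Pform d1 d2) + (Pform d3 d4) + (Pform d5 d6))
      + octF d1 d2 d3 d4 d5 d6 * ((Pform d1 d3) + (Pform d2 d5) + (Pform d4 d6))
    = ((Pform d2 d4) * (octSZ d1 d2 d3 d4 d5 d6) + (Pform d3 d5) * (octSZ d1 d2 d3 d4 d5 d6) + (octSX d1 d2 d3 d4 d5 d6)) := by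
  simp only [octA, octB, octC, octD, octE, octF, octG, octH, Pform, Qform, octSX, octSY, octSZ]
  ring

lemma octComp2_c102 {R : Type*} [CommRing R] (d1 d2 d3 d4 d5 d6 : R) :
    octC d1 d2 d3 d4 d5 d6 * ((Pform d1 d2) + (Pform d3 d4) + (Pform d5 d6))
      + octD d1 d2 d3 d4 d5 d6 * ((Pform d1 d3) + (Pform d2 d5) + (Pform d4 d6))
      + octG d1 d2 d3 d4 d5 d6 * ((Pform d1 d2) + (Pform d3 d5) + (Pform d4 d6))
      + octH d1 d2 d3 d4 d5 d6 * ((Pform d1 d3) + (Pform d2 d4) + (Pform d5 d6))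
    = (-((Pform d3 d4) * (octSZ d1 d2 d3 d4 d5 d6) + (Pform d2 d5) * (octSZ d1 d2 d3 d4 d5 d6) + (octSX d1 d2 d3 d4 d5 d6))) := by
  simp only [octA, octB, octC, octD, octE, octF, octG, octH, Pform, Qform, octSX, octSY, octSZ]
  ring

lemma octComp1_c030 {R : Type*} [CommRing R] (d1 d2 d3 d4 d5 d6 : R) :
    octA d1 d2 d3 d4 d5 d6 * (-(Qform d1 d2) * (Qform d3 d5) * (Qform d4 d6))
      + octB d1 d2 d3 d4 d5 d6 * (-(Qform d1 d3) * (Qform d2 d4) * (Qform d5 d6))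
      + octE d1 d2 d3 d4 d5 d6 * (-(Qform d1 d2) * (Qform d3 d4) * (Qform d5 d6))
      + octF d1 d2 d3 d4 d5 d6 * (-(Qform d1 d3) * (Qform d2 d5) * (Qform d4 d6))
    = ((Qform d2 d4) * (Qform d3 d5) * (octSY d1 d2 d3 d4 d5 d6)) := by
  simp only [octA, octB, octC, octD, octE, octF, octG, octH, Pform, Qform, octSX, octSY, octSZ]
  ring

lemma octComp2_c030 {R : Type*} [CommRing R] (d1 d2 d3 d4 d5 d6 : R) :
    octC d1 d2 d3 d4 d5 d6 * (-(Qform d1 d2) * (Qform d3 d4) * (Qform d5 d6))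
      + octD d1 d2 d3 d4 d5 d6 * (-(Qform d1 d3) * (Qform d2 d5) * (Qform d4 d6))
      + octG d1 d2 d3 d4 d5 d6 * (-(Qform d1 d2) * (Qform d3 d5) * (Qform d4 d6))
      + octH d1 d2 d3 d4 d5 d6 * (-(Qform d1 d3) * (Qform d2 d4) * (Qform d5 d6))
    = (-((Qform d3 d4) * (Qform d2 d5) * (octSY d1 d2 d3 d4 d5 d6))) := by
  simp only [octA, octB, octC, octD, octE, octF, octG, octH, Pform, Qform, octSX, octSY, octSZ]
  ring

lemma octComp1_c021 {R : Type*} [CommRing R] (d1 d2 d3 d4 d5 d6 : R) :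
    octA d1 d2 d3 d4 d5 d6 * ((Qform d1 d2) * (Qform d4 d6) + (Qform d3 d5) * (Qform d4 d6) + (Qform d1 d2) * (Qform d3 d5))
      + octB d1 d2 d3 d4 d5 d6 * ((Qform d1 d3) * (Qform d5 d6) + (Qform d2 d4) * (Qform d5 d6) + (Qform d1 d3) * (Qform d2 d4))
      + octE d1 d2 d3 d4 d5 d6 * ((Qform d1 d2) * (Qform d5 d6) + (Qform d3 d4) * (Qform d5 d6) + (Qform d1 d2) * (Qform d3 d4))
      + octF d1 d2 d3 d4 d5 d6 * ((Qform d1 d3) * (Qform d4 d6) + (Qform d2 d5) * (Qform d4 d6) + (Qform d1 d3) * (Qform d2 d5))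
    = (-(Qform d2 d4) * (octSY d1 d2 d3 d4 d5 d6) - (Qform d3 d5) * (octSY d1 d2 d3 d4 d5 d6) + (Qform d2 d4) * (Qform d3 d5) * (octSZ d1 d2 d3 d4 d5 d6)) := by
  simp only [octA, octB, octC, octD, octE, octF, octG, octH, Pform, Qform, octSX, octSY, octSZ]
  ring

lemma octComp2_c021 {R : Type*} [CommRing R] (d1 d2 d3 d4 d5 d6 : R) :
    octC d1 d2 d3 d4 d5 d6 * ((Qform d1 d2) * (Qform d5 d6) + (Qform d3 d4) * (Qform d5 d6) + (Qform d1 d2) * (Qform d3 d4))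
      + octD d1 d2 d3 d4 d5 d6 * ((Qform d1 d3) * (Qform d4 d6) + (Qform d2 d5) * (Qform d4 d6) + (Qform d1 d3) * (Qform d2 d5))
      + octG d1 d2 d3 d4 d5 d6 * ((Qform d1 d2) * (Qform d4 d6) + (Qform d3 d5) * (Qform d4 d6) + (Qform d1 d2) * (Qform d3 d5))
      + octH d1 d2 d3 d4 d5 d6 * ((Qform d1 d3) * (Qform d5 d6) + (Qform d2 d4) * (Qform d5 d6) + (Qform d1 d3) * (Qform d2 d4))
    = (-(-(Qform d3 d4) * (octSY d1 d2 d3 d4 d5 d6) - (Qform d2 d5) * (octSY d1 d2 d3 d4 d5 d6) + (Qform d3 d4) * (Qform d2 d5) * (octSZ d1 d2 d3 d4 d5 d6))) := by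
  simp only [octA, octB, octC, octD, octE, octF, octG, octH, Pform, Qform, octSX, octSY, octSZ]
  ring

lemma octComp1_c012 {R : Type*} [CommRing R] (d1 d2 d3 d4 d5 d6 : R) :
    octA d1 d2 d3 d4 d5 d6 * (-(Qform d1 d2) - (Qform d3 d5) - (Qform d4 d6))
      + octB d1 d2 d3 d4 d5 d6 * (-(Qform d1 d3) - (Qform d2 d4) - (Qform d5 d6))
      + octE d1 d2 d3 d4 d5 d6 * (-(Qform d1 d2) - (Qform d3 d4) - (Qform d5 d6))
      + octF d1 d2 d3 d4 d5 d6 * (-(Qform d1 d3) - (Qform d2 d5) - (Qform d4 d6))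
    = (-(Qform d2 d4) * (octSZ d1 d2 d3 d4 d5 d6) - (Qform d3 d5) * (octSZ d1 d2 d3 d4 d5 d6) + (octSY d1 d2 d3 d4 d5 d6)) := by
  simp only [octA, octB, octC, octD, octE, octF, octG, octH, Pform, Qform, octSX, octSY, octSZ]
  ring

lemma octComp2_c012 {R : Type*} [CommRing R] (d1 d2 d3 d4 d5 d6 : R) :
    octC d1 d2 d3 d4 d5 d6 * (-(Qform d1 d2) - (Qform d3 d4) - (Qform d5 d6))
      + octD d1 d2 d3 d4 d5 d6 * (-(Qform d1 d3) - (Qform d2 d5) - (Qform d4 d6))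
      + octG d1 d2 d3 d4 d5 d6 * (-(Qform d1 d2) - (Qform d3 d5) - (Qform d4 d6))
      + octH d1 d2 d3 d4 d5 d6 * (-(Qform d1 d3) - (Qform d2 d4) - (Qform d5 d6))
    = (-(-(Qform d3 d4) * (octSZ d1 d2 d3 d4 d5 d6) - (Qform d2 d5) * (octSZ d1 d2 d3 d4 d5 d6) + (octSY d1 d2 d3 d4 d5 d6))) := by
  simp only [octA, octB, octC, octD, octE, octF, octG, octH, Pform, Qform, octSX, octSY, octSZ]
  ring

lemma octComp1_c003 {R : Type*} [CommRing R] (d1 d2 d3 d4 d5 d6 : R) :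
    octA d1 d2 d3 d4 d5 d6 * (1)
      + octB d1 d2 d3 d4 d5 d6 * (1)
      + octE d1 d2 d3 d4 d5 d6 * (1)
      + octF d1 d2 d3 d4 d5 d6 * (1)
    = ((octSZ d1 d2 d3 d4 d5 d6)) := by
  simp only [octA, octB, octC, octD, octE, octF, octG, octH, Pform, Qform, octSX, octSY, octSZ]
  ring

lemma octComp2_c003 {R : Type*} [CommRing R] (d1 d2 d3 d4 d5 d6 : R) :
    octC d1 d2 d3 d4 d5 d6 * (1)
      + octD d1 d2 d3 d4 d5 d6 * (1)
      + octG d1 d2 d3 d4 d5 d6 * (1)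
      + octH d1 d2 d3 d4 d5 d6 * (1)
    = (-((octSZ d1 d2 d3 d4 d5 d6))) := by
  simp only [octA, octB, octC, octD, octE, octF, octG, octH, Pform, Qform, octSX, octSY, octSZ]
  ring


lemma octKey1 {R : Type*} [CommRing R] (d1 d2 d3 d4 d5 d6 XX YY ZZ : R) :
    octA d1 d2 d3 d4 d5 d6 * (Fform d1 d2 XX YY ZZ * Fform d3 d5 XX YY ZZ * Fform d4 d6 XX YY ZZ)
    + octB d1 d2 d3 d4 d5 d6 * (Fform d1 d3 XX YY ZZ * Fform d2 d4 XX YY ZZ * Fform d5 d6 XX YY ZZ)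
    + octE d1 d2 d3 d4 d5 d6 * (Fform d1 d2 XX YY ZZ * Fform d3 d4 XX YY ZZ * Fform d5 d6 XX YY ZZ)
    + octF d1 d2 d3 d4 d5 d6 * (Fform d1 d3 XX YY ZZ * Fform d2 d5 XX YY ZZ * Fform d4 d6 XX YY ZZ)
    = Fform d2 d4 XX YY ZZ * Fform d3 d5 XX YY ZZ * (octSX d1 d2 d3 d4 d5 d6 * XX + octSY d1 d2 d3 d4 d5 d6 * YY + octSZ d1 d2 d3 d4 d5 d6 * ZZ) := by
  simp only [Fform_PQ]
  linear_combination XX^3 * octComp1_c300 d1 d2 d3 d4 d5 d6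
    + XX^2*YY * octComp1_c210 d1 d2 d3 d4 d5 d6
    + XX^2*ZZ * octComp1_c201 d1 d2 d3 d4 d5 d6
    + XX*YY^2 * octComp1_c120 d1 d2 d3 d4 d5 d6
    + XX*YY*ZZ * octComp1_c111 d1 d2 d3 d4 d5 d6
    + XX*ZZ^2 * octComp1_c102 d1 d2 d3 d4 d5 d6
    + YY^3 * octComp1_c030 d1 d2 d3 d4 d5 d6
    + YY^2*ZZ * octComp1_c021 d1 d2 d3 d4 d5 d6
    + YY*ZZ^2 * octComp1_c012 d1 d2 d3 d4 d5 d6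
    + ZZ^3 * octComp1_c003 d1 d2 d3 d4 d5 d6

lemma octKey2 {R : Type*} [CommRing R] (d1 d2 d3 d4 d5 d6 XX YY ZZ : R) :
    octC d1 d2 d3 d4 d5 d6 * (Fform d1 d2 XX YY ZZ * Fform d3 d4 XX YY ZZ * Fform d5 d6 XX YY ZZ)
    + octD d1 d2 d3 d4 d5 d6 * (Fform d1 d3 XX YY ZZ * Fform d2 d5 XX YY ZZ * Fform d4 d6 XX YY ZZ)
    + octG d1 d2 d3 d4 d5 d6 * (Fform d1 d2 XX YY ZZ * Fform d3 d5 XX YY ZZ * Fform d4 d6 XX YY ZZ)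
    + octH d1 d2 d3 d4 d5 d6 * (Fform d1 d3 XX YY ZZ * Fform d2 d4 XX YY ZZ * Fform d5 d6 XX YY ZZ)
    = -(Fform d3 d4 XX YY ZZ * Fform d2 d5 XX YY ZZ * (octSX d1 d2 d3 d4 d5 d6 * XX + octSY d1 d2 d3 d4 d5 d6 * YY + octSZ d1 d2 d3 d4 d5 d6 * ZZ)) := by
  simp only [Fform_PQ]
  linear_combination XX^3 * octComp2_c300 d1 d2 d3 d4 d5 d6
    + XX^2*YY * octComp2_c210 d1 d2 d3 d4 d5 d6
    + XX^2*ZZ * octComp2_c201 d1 d2 d3 d4 d5 d6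
    + XX*YY^2 * octComp2_c120 d1 d2 d3 d4 d5 d6
    + XX*YY*ZZ * octComp2_c111 d1 d2 d3 d4 d5 d6
    + XX*ZZ^2 * octComp2_c102 d1 d2 d3 d4 d5 d6
    + YY^3 * octComp2_c030 d1 d2 d3 d4 d5 d6
    + YY^2*ZZ * octComp2_c021 d1 d2 d3 d4 d5 d6
    + YY*ZZ^2 * octComp2_c012 d1 d2 d3 d4 d5 d6
    + ZZ^3 * octComp2_c003 d1 d2 d3 d4 d5 d6

lemma octCombine {R : Type*} [CommRing R] (a b c dd e f g h s x y z w p q : R)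
    (h1 : a * z + b * w + e * x + f * y = p * s)
    (h2 : c * x + dd * y + g * z + h * w = -(q * s))
    (h3 : x * y * p = z * w * q) :
    a * (x * y * z) + b * (x * y * w) + c * (x * z * w) + dd * (y * z * w)
      + e * (x ^ 2 * y) + f * (x * y ^ 2) + g * (z ^ 2 * w) + h * (z * w ^ 2) = 0 := by
  linear_combination x * y * h1 + z * w * h2 + s * h3

lemma octKey3 {R : Type*} [CommRing R] (f01 f23 f45 f02 f14 f35 f13 f24 : R) :
    (f01 * f23 * f45) * (f02 * f14 * f35) * (f13 * f24)
      = (f01 * f24 * f35) * (f02 * f13 * f45) * (f23 * f14) := by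
  ring

/-- Substituting `x = F₁₂F₃₄F₅₆`, `y = F₁₃F₂₅F₄₆`, `z = F₁₂F₃₅F₄₆`, `w = F₁₃F₂₄F₅₆`
into the octanomial cubic (with coefficients the quintics of Proposition 2.1)
yields the zero polynomial in ℚ[d₁,…,d₆,X,Y,Z]. -/
theorem stmt7 :
    let R := MvPolynomial (Fin 9) ℚ
    let d : Fin 6 → R := fun i => X (Fin.castLE (by norm_num) i)
    let XX : R := X 6
    let YY : R := X 7
    let ZZ : R := X 8
    let F : Fin 6 → Fin 6 → R := fun i j => Fform (d i) (d j) XX YY ZZ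
    let x : R := F 0 1 * F 2 3 * F 4 5
    let y : R := F 0 2 * F 1 4 * F 3 5
    let z : R := F 0 1 * F 2 4 * F 3 5
    let w : R := F 0 2 * F 1 3 * F 4 5
    octA (d 0) (d 1) (d 2) (d 3) (d 4) (d 5) * (x * y * z)
      + octB (d 0) (d 1) (d 2) (d 3) (d 4) (d 5) * (x * y * w)
      + octC (d 0) (d 1) (d 2) (d 3) (d 4) (d 5) * (x * z * w)
      + octD (d 0) (d 1) (d 2) (d 3) (d 4) (d 5) * (y * z * w)
      + octE (d 0) (d 1) (d 2) (d 3) (d 4) (d 5) * (x ^ 2 * y)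
      + octF (d 0) (d 1) (d 2) (d 3) (d 4) (d 5) * (x * y ^ 2)
      + octG (d 0) (d 1) (d 2) (d 3) (d 4) (d 5) * (z ^ 2 * w)
      + octH (d 0) (d 1) (d 2) (d 3) (d 4) (d 5) * (z * w ^ 2)
      = 0 := by
  intro R d XX YY ZZ F x y z w
  exact octCombine _ _ _ _ _ _ _ _
    (octSX (d 0) (d 1) (d 2) (d 3) (d 4) (d 5) * XX + octSY (d 0) (d 1) (d 2) (d 3) (d 4) (d 5) * YY
      + octSZ (d 0) (d 1) (d 2) (d 3) (d 4) (d 5) * ZZ) x y z w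
    (F 1 3 * F 2 4) (F 2 3 * F 1 4)
    (octKey1 (d 0) (d 1) (d 2) (d 3) (d 4) (d 5) XX YY ZZ)
    (octKey2 (d 0) (d 1) (d 2) (d 3) (d 4) (d 5) XX YY ZZ)
    (octKey3 (F 0 1) (F 2 3) (F 4 5) (F 0 2) (F 1 4) (F 3 5) (F 1 3) (F 2 4))
end

section
/- The toric ideal I_A, i.e. the kernel of the map φ sending a↦t_1t_2t_3, b↦t_1t_2t_4, c↦t_1t_3t_4, d↦t_2t_3t_4, e↦t_1²t_2, f↦t_1t_2², g↦t_3²t_4, h↦t_3t_4², is generated by the eight binomials ab−cf, ac−eg, ad−fg, ah−cd, bg−cd, cf−de, eh−bc, fh−bd. -/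
/-!
Give `a, b, c, h` the weights `1, 2, 1, 4` and the other variables weight `0`. The first term of
each of the eight binomials is then strictly heavier, so rewriting with them brings every
monomial, modulo the ideal, to a standard monomial: one divisible by none of
`ab, ac, ad, ah, bg, cf, eh, fh`. The standard monomials are those supported on one of the seven
faces `aefg, cdgh, bcdh, defg, cdeg, bdef, bcde` of a triangulation of the point configuration;
the four exponent vectors of each face are linearly independent and the cones over two faces meet
only in a common face, so `φ` is injective on standard monomials. Hence a polynomial in `ker φ`
is congruent to a combination of standard monomials that `φ` kills, and that combination is `0`.
-/

open MvPolynomial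

/-- The monomials defining the toric map:
`a ↦ t₁t₂t₃, b ↦ t₁t₂t₄, c ↦ t₁t₃t₄, d ↦ t₂t₃t₄, e ↦ t₁²t₂, f ↦ t₁t₂², g ↦ t₃²t₄, h ↦ t₃t₄²`. -/
noncomputable def phiMon : Fin 8 → MvPolynomial (Fin 4) ℚ
  | 0 => X 0 * X 1 * X 2
  | 1 => X 0 * X 1 * X 3
  | 2 => X 0 * X 2 * X 3
  | 3 => X 1 * X 2 * X 3
  | 4 => X 0 ^ 2 * X 1
  | 5 => X 0 * X 1 ^ 2
  | 6 => X 2 ^ 2 * X 3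
  | 7 => X 2 * X 3 ^ 2

/-- The monoid-algebra homomorphism `ℚ[a,…,h] → ℚ[t₁,…,t₄]` of the support set `A`. -/
noncomputable def phiA : MvPolynomial (Fin 8) ℚ →ₐ[ℚ] MvPolynomial (Fin 4) ℚ :=
  aeval phiMon

open Finsupp

namespace MvPolynomial

variable {R σ τ : Type*} [CommRing R]

theorem aeval_monomial_monomial (A : σ → τ →₀ ℕ) (u : σ →₀ ℕ) (c : R) :
    aeval (fun i => monomial (A i) (1 : R)) (monomial u c) = monomial (weight A u) c := by
  simp only [aeval_monomial, monomial_pow, one_pow, weight_apply, monomial_finsupp_sum_index,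
    algebraMap_eq]

theorem monomial_add_sub_monomial_add_mem {J : Ideal (MvPolynomial σ R)} {u u' : σ →₀ ℕ}
    (h : monomial u (1 : R) - monomial u' 1 ∈ J) (v : σ →₀ ℕ) :
    monomial (v + u) (1 : R) - monomial (v + u') 1 ∈ J := by
  simpa only [mul_sub, monomial_mul, one_mul] using J.mul_mem_left (monomial v 1) h

theorem exists_weight_lt_of_binomial_mem {J : Ideal (MvPolynomial σ R)} {w : σ → ℕ}
    {u : σ →₀ ℕ} {i j k l : σ} (hij : i ≠ j) (hi : u i ≠ 0) (hj : u j ≠ 0)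
    (hmem : X i * X j - X k * X l ∈ J) (hw : w k + w l < w i + w j) :
    ∃ u', weight w u' < weight w u ∧ monomial u (1 : R) - monomial u' 1 ∈ J := by
  classical
  have hle : single i 1 + single j 1 ≤ u := fun a => by
    simp only [Finsupp.add_apply, single_apply]
    split_ifs <;> subst_vars <;> first | omega | exact absurd rfl hij
  rw [← tsub_add_cancel_of_le hle]
  refine ⟨u - (single i 1 + single j 1) + (single k 1 + single l 1), ?_, ?_⟩
  · simpa only [map_add, weight_single, one_smul, add_assoc] using
      Nat.add_lt_add_left hw (weight w (u - (single i 1 + single j 1)))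
  · refine monomial_add_sub_monomial_add_mem ?_ _
    simpa only [X, monomial_mul, mul_one] using hmem

theorem exists_monomial_sub_mem_of_descent {J : Ideal (MvPolynomial σ R)} {S : Set (σ →₀ ℕ)}
    (wt : (σ →₀ ℕ) → ℕ)
    (hred : ∀ u ∉ S, ∃ u', wt u' < wt u ∧ monomial u (1 : R) - monomial u' 1 ∈ J)
    (u : σ →₀ ℕ) : ∃ w ∈ S, monomial u (1 : R) - monomial w 1 ∈ J := by
  by_cases hu : u ∈ S
  · exact ⟨u, hu, by simp⟩
  obtain ⟨u', hlt, hmem⟩ := hred u hu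
  obtain ⟨w, hw, hmem'⟩ := exists_monomial_sub_mem_of_descent wt hred u'
  exact ⟨w, hw, by simpa using J.add_mem hmem hmem'⟩
termination_by wt u

theorem exists_support_subset_sub_mem {J : Ideal (MvPolynomial σ R)} {S : Set (σ →₀ ℕ)}
    (hnf : ∀ u, ∃ w ∈ S, monomial u (1 : R) - monomial w 1 ∈ J) (p : MvPolynomial σ R) :
    ∃ q : MvPolynomial σ R, ↑q.support ⊆ S ∧ p - q ∈ J := by
  classical
  induction p using MvPolynomial.induction_on' with
  | monomial u c =>
    obtain ⟨w, hw, hmem⟩ := hnf u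
    refine ⟨monomial w c,
      (Finset.coe_subset.2 support_monomial_subset).trans (by simpa using hw), ?_⟩
    simpa [mul_sub, C_mul_monomial] using J.mul_mem_left (C c) hmem
  | add p q hp hq =>
    obtain ⟨p', hp', hpmem⟩ := hp
    obtain ⟨q', hq', hqmem⟩ := hq
    refine ⟨p' + q', (Finset.coe_subset.2 support_add).trans ?_, ?_⟩
    · simpa using And.intro hp' hq'
    · simpa [add_sub_add_comm] using J.add_mem hpmem hqmem

theorem coeff_weight_aeval_monomial {S : Set (σ →₀ ℕ)} {A : σ → τ →₀ ℕ}
    (hA : Set.InjOn (weight A) S) {q : MvPolynomial σ R} (hq : ↑q.support ⊆ S) {u : σ →₀ ℕ}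
    (hu : u ∈ S) : coeff (weight A u) (aeval (fun i => monomial (A i) (1 : R)) q) = coeff u q := by
  classical
  conv_lhs => rw [q.as_sum]
  simp only [map_sum, aeval_monomial_monomial, coeff_sum, coeff_monomial]
  refine (Finset.sum_eq_single u (fun v hv hvu => if_neg fun h => hvu (hA (hq hv) hu h))
    fun hu' => ?_).trans (if_pos rfl)
  rw [if_pos rfl, notMem_support_iff.1 hu']

theorem ker_aeval_monomial_eq {J : Ideal (MvPolynomial σ R)} {S : Set (σ →₀ ℕ)}
    {A : σ → τ →₀ ℕ} (hJ : J ≤ RingHom.ker (aeval fun i => monomial (A i) (1 : R)))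
    (hnf : ∀ u, ∃ w ∈ S, monomial u (1 : R) - monomial w 1 ∈ J) (hA : Set.InjOn (weight A) S) :
    RingHom.ker (aeval fun i => monomial (A i) (1 : R)) = J := by
  refine le_antisymm (fun p hp => ?_) hJ
  obtain ⟨q, hqS, hpq⟩ := exists_support_subset_sub_mem hnf p
  have hq : aeval (fun i => monomial (A i) (1 : R)) q = 0 := by
    have hpq' := RingHom.mem_ker.1 (hJ hpq)
    rwa [map_sub, RingHom.mem_ker.1 hp, zero_sub, neg_eq_zero] at hpq'
  have hq0 : q = 0 := by
    ext u
    by_cases hu : u ∈ q.support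
    · rw [← coeff_weight_aeval_monomial hA hqS (hqS hu), hq, coeff_zero, coeff_zero]
    · rw [notMem_support_iff.1 hu, coeff_zero]
  simpa [hq0] using hpq

end MvPolynomial

noncomputable def phiExp (i : Fin 8) : Fin 4 →₀ ℕ :=
  equivFunOnFinite.symm
    (![![1, 1, 1, 0], ![1, 1, 0, 1], ![1, 0, 1, 1], ![0, 1, 1, 1],
      ![2, 1, 0, 0], ![1, 2, 0, 0], ![0, 0, 2, 1], ![0, 0, 1, 2]] i)

theorem phiMon_eq_monomial (i : Fin 8) : phiMon i = monomial (phiExp i) 1 := by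
  fin_cases i <;>
  · simp only [phiMon, X, monomial_pow, monomial_mul, one_pow, mul_one]
    refine congrArg (monomial · 1) ?_
    ext t
    fin_cases t <;> simp [phiExp]

theorem phiA_eq_aeval_monomial : phiA = aeval fun i => monomial (phiExp i) 1 :=
  congrArg aeval (funext phiMon_eq_monomial)

noncomputable def toricBinomials : Set (MvPolynomial (Fin 8) ℚ) :=
  {X 0 * X 1 - X 2 * X 5, X 0 * X 2 - X 4 * X 6,
    X 0 * X 3 - X 5 * X 6, X 0 * X 7 - X 2 * X 3, X 1 * X 6 - X 2 * X 3,
    X 2 * X 5 - X 3 * X 4, X 4 * X 7 - X 1 * X 2, X 5 * X 7 - X 1 * X 3}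

theorem span_toricBinomials_le_ker : Ideal.span toricBinomials ≤ RingHom.ker phiA := by
  rw [Ideal.span_le]
  rintro _ (rfl | rfl | rfl | rfl | rfl | rfl | rfl | rfl) <;>
  · simp only [SetLike.mem_coe, RingHom.mem_ker, map_sub, map_mul, phiA, aeval_X, phiMon]
    ring

def IsStandard (u : Fin 8 →₀ ℕ) : Prop :=
  (u 0 = 0 ∨ u 1 = 0) ∧ (u 0 = 0 ∨ u 2 = 0) ∧ (u 0 = 0 ∨ u 3 = 0) ∧ (u 0 = 0 ∨ u 7 = 0) ∧
  (u 1 = 0 ∨ u 6 = 0) ∧ (u 2 = 0 ∨ u 5 = 0) ∧ (u 4 = 0 ∨ u 7 = 0) ∧ (u 5 = 0 ∨ u 7 = 0)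

theorem exists_isStandard_monomial_sub_mem (u : Fin 8 →₀ ℕ) :
    ∃ w ∈ {u | IsStandard u}, monomial u (1 : ℚ) - monomial w 1 ∈ Ideal.span toricBinomials := by
  have step {v : Fin 8 →₀ ℕ} {i j : Fin 8} (k l : Fin 8) (hi : v i ≠ 0) (hj : v j ≠ 0)
      (hij : i ≠ j := by decide)
      (hmem : X i * X j - X k * X l ∈ toricBinomials := by simp [toricBinomials])
      (hw : ![1, 2, 1, 0, 0, 0, 0, 4] k + ![1, 2, 1, 0, 0, 0, 0, 4] l <
        ![1, 2, 1, 0, 0, 0, 0, 4] i + ![1, 2, 1, 0, 0, 0, 0, 4] j := by decide) :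
      ∃ v', weight ![1, 2, 1, 0, 0, 0, 0, 4] v' < weight ![1, 2, 1, 0, 0, 0, 0, 4] v ∧
        monomial v (1 : ℚ) - monomial v' 1 ∈ Ideal.span toricBinomials :=
    exists_weight_lt_of_binomial_mem hij hi hj (Ideal.subset_span hmem) hw
  refine exists_monomial_sub_mem_of_descent (weight ![1, 2, 1, 0, 0, 0, 0, 4]) (fun v hv => ?_) u
  simp only [Set.mem_ofPred_eq, IsStandard, not_and_or, not_or] at hv
  rcases hv with ⟨ha, hb⟩ | ⟨ha, hc⟩ | ⟨ha, hd⟩ | ⟨ha, hh⟩ | ⟨hb, hg⟩ | ⟨hc, hf⟩ | ⟨he, hh⟩ |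
      ⟨hf, hh⟩
  · exact step 2 5 ha hb
  · exact step 4 6 ha hc
  · exact step 5 6 ha hd
  · exact step 2 3 ha hh
  · exact step 2 3 hb hg
  · exact step 3 4 hc hf
  · exact step 1 2 he hh
  · exact step 1 3 hf hh

theorem IsStandard.faces {u : Fin 8 →₀ ℕ} (hu : IsStandard u) :
    (u 1 = 0 ∧ u 2 = 0 ∧ u 3 = 0 ∧ u 7 = 0) ∨ (u 0 = 0 ∧ u 1 = 0 ∧ u 4 = 0 ∧ u 5 = 0) ∨
    (u 0 = 0 ∧ u 4 = 0 ∧ u 5 = 0 ∧ u 6 = 0) ∨ (u 0 = 0 ∧ u 1 = 0 ∧ u 2 = 0 ∧ u 7 = 0) ∨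
    (u 0 = 0 ∧ u 1 = 0 ∧ u 5 = 0 ∧ u 7 = 0) ∨ (u 0 = 0 ∧ u 2 = 0 ∧ u 6 = 0 ∧ u 7 = 0) ∨
    (u 0 = 0 ∧ u 5 = 0 ∧ u 6 = 0 ∧ u 7 = 0) := by
  obtain ⟨hab, hac, had, hah, hbg, hcf, heh, hfh⟩ := hu
  by_cases ha : u 0 = 0
  · by_cases hh : u 7 = 0
    · rcases hbg with hb | hg <;> rcases hcf with hc | hf <;> simp_all
    · simp_all
  · simp_all

set_option maxHeartbeats 1000000 in
theorem injOn_weight_phiExp : Set.InjOn (weight phiExp) {u | IsStandard u} := by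
  intro u hu w hw h
  have coord (t : Fin 4) : ∑ i, u i * phiExp i t = ∑ i, w i * phiExp i t := by
    simpa [weight_eq_sum] using DFunLike.congr_fun h t
  obtain ⟨e0, e1, e2, e3⟩ : _ ∧ _ ∧ _ ∧ _ := ⟨coord 0, coord 1, coord 2, coord 3⟩
  simp [Fin.sum_univ_eight, phiExp] at e0 e1 e2 e3
  suffices u 0 = w 0 ∧ u 1 = w 1 ∧ u 2 = w 2 ∧ u 3 = w 3 ∧ u 4 = w 4 ∧ u 5 = w 5 ∧ u 6 = w 6 ∧
      u 7 = w 7 by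
    ext i
    fin_cases i <;> simp [this]
  rcases hu.faces with hu | hu | hu | hu | hu | hu | hu <;>
    rcases hw.faces with hw | hw | hw | hw | hw | hw | hw <;>
    obtain ⟨h1, h2, h3, h4⟩ := hu <;> obtain ⟨g1, g2, g3, g4⟩ := hw <;>
    simp only [h1, h2, h3, h4, g1, g2, g3, g4, zero_add, add_zero, zero_mul, true_and,
      and_true] at e0 e1 e2 e3 ⊢ <;>
    omega

/-- The variables `a, …, h` are `X 0, …, X 7`. -/
theorem stmt10 :
    RingHom.ker phiA.toRingHom =
      Ideal.span {X 0 * X 1 - X 2 * X 5, X 0 * X 2 - X 4 * X 6,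
        X 0 * X 3 - X 5 * X 6, X 0 * X 7 - X 2 * X 3, X 1 * X 6 - X 2 * X 3,
        X 2 * X 5 - X 3 * X 4, X 4 * X 7 - X 1 * X 2, X 5 * X 7 - X 1 * X 3} := by
  have hle := span_toricBinomials_le_ker
  rw [phiA_eq_aeval_monomial] at hle ⊢
  exact ker_aeval_monomial_eq hle exists_isStandard_monomial_sub_mem injOn_weight_phiExp
end
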